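/- Let K be a simplicial complex on a finite vertex set V with Helly number h(K) ≤ d, and let t ≥ 0 be an integer. Then the Helly number of the t-tolerance complex satisfies h(T_t(K)) ≤ η(d+1,t+1) − 1. -/

import Mathlib

open Finset

variable {V : Type*} [DecidableEq V] [LinearOrder V] [Fintype V]

/-- A (possibly void) simplicial complex: a family of finite sets closed under subsets. -/
def IsComplex {V : Type*} [DecidableEq V] (K : Finset (Finset V)) : Prop :=
  ∀ σ ∈ K, ∀ τ ⊆ σ, τ ∈ K

/-- The faces of `X` which are not faces of `Y` and have cardinality `j + 1`
(i.e. dimension `j`). -/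
abbrev RelFace (X Y : Finset (Finset V)) (j : ℤ) : Type _ :=
  {σ : Finset V // σ ∈ X ∧ σ ∉ Y ∧ (σ.card : ℤ) = j + 1}

/-- The simplicial boundary operator from `i`-dimensional chains of the pair `(X, Y)` to
`j`-dimensional chains; it is the usual boundary operator when `j = i - 1`
(and the zero map otherwise). Signs are determined by the linear order on the vertices. -/
noncomputable def relBoundary (X Y : Finset (Finset V)) (i j : ℤ) :
    (RelFace X Y i → ℝ) →ₗ[ℝ] (RelFace X Y j → ℝ) :=
  Matrix.mulVecLin fun (τ : RelFace X Y j) (σ : RelFace X Y i) =>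
    ∑ v ∈ σ.1, if σ.1.erase v = τ.1 then (-1 : ℝ) ^ (σ.1.filter (· < v)).card else 0

/-- The `j`-th relative simplicial homology group (with ℝ coefficients) of the pair `(X, Y)`:
cycles modulo boundaries, in the chain complex generated by the simplices of `X` not in `Y`. -/
noncomputable abbrev relHomology (X Y : Finset (Finset V)) (j : ℤ) : Type _ :=
  LinearMap.ker (relBoundary X Y j (j - 1)) ⧸
    Submodule.comap (LinearMap.ker (relBoundary X Y j (j - 1))).subtype
      (LinearMap.range (relBoundary X Y (j + 1) j))

/-- The `j`-th reduced simplicial homology group of `K`, with ℝ coefficients.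
(The chain complex is augmented: the empty set is a face of dimension `-1`.) -/
noncomputable abbrev reducedHomology (K : Finset (Finset V)) (j : ℤ) : Type _ :=
  relHomology K ∅ j

/-- The subcomplex of `K` induced by the vertex set `U`. -/
def induced {V : Type*} [DecidableEq V] (K : Finset (Finset V)) (U : Finset V) :
    Finset (Finset V) :=
  K.filter fun σ => σ ⊆ U

/-- `K` is `d`-Leray: every induced subcomplex has trivial reduced homology in
dimensions `d` and higher. -/
def IsLeray (d : ℕ) (K : Finset (Finset V)) : Prop :=
  ∀ (U : Finset V) (i : ℤ), (d : ℤ) ≤ i → Subsingleton (reducedHomology (induced K U) i)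

/-- The complex is acyclic: all reduced homology groups vanish. -/
def IsAcyclic (K : Finset (Finset V)) : Prop :=
  ∀ i : ℤ, -1 ≤ i → Subsingleton (reducedHomology K i)

/-- The Leray number of `K`: the minimal `d` such that `K` is `d`-Leray. -/
noncomputable def lerayNumber (K : Finset (Finset V)) : ℕ :=
  sInf {d : ℕ | IsLeray d K}

/-- The link of a face `τ` in `K`. -/
def link {V : Type*} [DecidableEq V] (K : Finset (Finset V)) (τ : Finset V) :
    Finset (Finset V) :=
  K.filter fun σ => σ ∩ τ = ∅ ∧ σ ∪ τ ∈ K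

/-- The costar of a face `τ` in `K`: all faces not containing `τ`. -/
def costar {V : Type*} [DecidableEq V] (K : Finset (Finset V)) (τ : Finset V) :
    Finset (Finset V) :=
  K.filter fun σ => ¬ τ ⊆ σ

/-- `τ` is a maximal face of `K`. -/
def IsMaximalFace {V : Type*} [DecidableEq V] (K : Finset (Finset V)) (τ : Finset V) : Prop :=
  τ ∈ K ∧ ∀ ρ ∈ K, τ ⊆ ρ → ρ = τ

/-- `σ` is a free face of `K`: it is contained in a unique maximal face of `K`. -/
def IsFreeFace {V : Type*} [DecidableEq V] (K : Finset (Finset V)) (σ : Finset V) : Prop :=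
  σ ∈ K ∧ ∃! τ : Finset V, IsMaximalFace K τ ∧ σ ⊆ τ

/-- `K` is `d`-collapsible: it can be reduced to the void complex by repeatedly removing all
faces containing some free face of size at most `d` (an elementary `d`-collapse). -/
inductive Collapsible {V : Type*} [DecidableEq V] (d : ℕ) : Finset (Finset V) → Prop
  | void : Collapsible d ∅
  | step (K : Finset (Finset V)) (σ : Finset V) : IsFreeFace K σ → σ.card ≤ d →
      Collapsible d (K.filter fun ρ => ¬ σ ⊆ ρ) → Collapsible d K

/-- The `t`-tolerance complex of `K`, with respect to the vertex set `A`: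
all sets of the form `η ∪ τ` with `η ∈ K`, `τ ⊆ A` and `|τ| ≤ t`. -/
def tol {V : Type*} [DecidableEq V] (A : Finset V) (t : ℕ) (K : Finset (Finset V)) :
    Finset (Finset V) :=
  ((A.powerset.filter fun τ => τ.card ≤ t) ×ˢ K).image fun p => p.2 ∪ p.1

/-- `τ` is a missing face of `K`: it is not a face, but all its proper subsets are faces. -/
def IsMissingFace {V : Type*} [DecidableEq V] (K : Finset (Finset V)) (τ : Finset V) : Prop :=
  τ ∉ K ∧ ∀ ρ ⊂ τ, ρ ∈ K

/-- `C` is a vertex cover of the hypergraph `H`: it meets every edge. -/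
def IsCover {α : Type*} [DecidableEq α] (H : Finset (Finset α)) (C : Finset α) : Prop :=
  ∀ e ∈ H, (e ∩ C).Nonempty

/-- The covering number `τ(H)` of a hypergraph `H`: the minimum size of a vertex cover. -/
noncomputable def coverNumber {α : Type*} [DecidableEq α] (H : Finset (Finset α)) : ℕ :=
  sInf {k : ℕ | ∃ C : Finset α, C.card = k ∧ IsCover H C}

/-- `H` is `t`-critical: its covering number is `t`, and removing any edge decreases it. -/
def IsCritical {α : Type*} [DecidableEq α] (t : ℕ) (H : Finset (Finset α)) : Prop :=
  coverNumber H = t ∧ ∀ e ∈ H, coverNumber (H.erase e) < t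

/-- The Erdős–Gallai number `η(r,t)`: the maximum number of vertices in an `r`-uniform
`t`-critical hypergraph. -/
noncomputable def eta (r t : ℕ) : ℕ :=
  sSup {n : ℕ | ∃ (m : ℕ) (H : Finset (Finset (Fin m))),
    (∀ e ∈ H, e.card = r) ∧ IsCritical t H ∧ (H.biUnion id).card = n}

/-- The indexed family `F` restricted to `T` has a point in common with tolerance `t`. -/
def TolerantCommonPoint {ι α : Type*} (F : ι → Set α) (S : Finset ι) (t : ℕ) : Prop :=
  ∃ T ⊆ S, S.card - t ≤ T.card ∧ (⋂ i ∈ T, F i).Nonempty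

section TolAux

variable {α : Type*} [DecidableEq α]

lemma tolAux_coverNumber_le_of_isCover {H : Finset (Finset α)} {C : Finset α}
    (h : IsCover H C) : coverNumber H ≤ C.card :=
  Nat.sInf_le ⟨C, rfl, h⟩

lemma tolAux_exists_isCover {H : Finset (Finset α)} (h : ∀ e ∈ H, e.Nonempty) :
    ∃ C : Finset α, C.card = coverNumber H ∧ IsCover H C := by
  have hcov : IsCover H (H.biUnion id) := by
    intro e he
    obtain ⟨x, hx⟩ := h e he
    exact ⟨x, Finset.mem_inter.mpr ⟨hx, Finset.mem_biUnion.mpr ⟨e, he, hx⟩⟩⟩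
  have hne : {k : ℕ | ∃ C : Finset α, C.card = k ∧ IsCover H C}.Nonempty :=
    ⟨(H.biUnion id).card, H.biUnion id, rfl, hcov⟩
  exact Nat.sInf_mem hne

lemma tolAux_coverNumber_empty : coverNumber (∅ : Finset (Finset α)) = 0 := by
  have h : coverNumber (∅ : Finset (Finset α)) ≤ (∅ : Finset α).card :=
    tolAux_coverNumber_le_of_isCover (by intro e he; simp at he)
  simpa using h

lemma tolAux_coverNumber_image {β : Type*} [DecidableEq β] (G : Finset (Finset α))
    (f : Finset α → Finset β) (u : α → β) (dn : β → α)
    (hne : ∀ e ∈ G, e.Nonempty)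
    (hu : ∀ e ∈ G, ∀ v ∈ e, u v ∈ f e)
    (hd : ∀ e ∈ G, ∀ w ∈ f e, dn w ∈ e) :
    coverNumber (G.image f) = coverNumber G := by
  have hne' : ∀ eh ∈ G.image f, eh.Nonempty := by
    intro eh heh
    obtain ⟨e, he, rfl⟩ := Finset.mem_image.mp heh
    obtain ⟨v, hv⟩ := hne e he
    exact ⟨u v, hu e he v hv⟩
  apply le_antisymm
  · obtain ⟨C, hC, hcov⟩ := tolAux_exists_isCover hne
    have hcov' : IsCover (G.image f) (C.image u) := by
      intro eh heh
      obtain ⟨e, he, rfl⟩ := Finset.mem_image.mp heh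
      obtain ⟨v, hv⟩ := hcov e he
      rw [Finset.mem_inter] at hv
      exact ⟨u v, Finset.mem_inter.mpr ⟨hu e he v hv.1, Finset.mem_image_of_mem u hv.2⟩⟩
    calc coverNumber (G.image f) ≤ (C.image u).card := tolAux_coverNumber_le_of_isCover hcov'
    _ ≤ C.card := Finset.card_image_le
    _ = coverNumber G := hC
  · obtain ⟨C, hC, hcov⟩ := tolAux_exists_isCover hne'
    have hcov' : IsCover G (C.image dn) := by
      intro e he
      obtain ⟨w, hw⟩ := hcov (f e) (Finset.mem_image_of_mem f he)
      rw [Finset.mem_inter] at hw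
      exact ⟨dn w, Finset.mem_inter.mpr ⟨hd e he w hw.1, Finset.mem_image_of_mem dn hw.2⟩⟩
    calc coverNumber G ≤ (C.image dn).card := tolAux_coverNumber_le_of_isCover hcov'
    _ ≤ C.card := Finset.card_image_le
    _ = coverNumber (G.image f) := hC

lemma tolAux_critical_card_bound {m : ℕ} (r s : ℕ) (H : Finset (Finset (Fin m)))
    (hu : ∀ e ∈ H, e.card = r) (hc : IsCritical s H) :
    (H.biUnion id).card ≤ r * 2 ^ (r + s) := by
  classical
  rcases Nat.eq_zero_or_pos s with hs | hs
  · have hH : H = ∅ := by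
      rw [Finset.eq_empty_iff_forall_notMem]
      intro e he
      have := hc.2 e he
      omega
    subst hH; simp
  have hene : ∀ e ∈ H, e.Nonempty := by
    intro e he
    rw [Finset.nonempty_iff_ne_empty]
    rintro rfl
    have h0 : coverNumber H = 0 := by
      rw [coverNumber]
      convert Nat.sInf_empty using 2
      ext k
      simp only [Set.mem_setOf_eq, Set.mem_empty_iff_false, iff_false]
      rintro ⟨C, -, hcov⟩
      obtain ⟨x, hx⟩ := hcov ∅ he
      simp at hx
    have h1 := hc.1
    omega
  have key : ∀ e : Finset (Fin m), ∃ C : Finset (Fin m), e ∈ H →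
      C.card < s ∧ IsCover (H.erase e) C ∧ e ∩ C = ∅ := by
    intro e
    by_cases he : e ∈ H
    · obtain ⟨C, hCc, hCcov⟩ := tolAux_exists_isCover (H := H.erase e)
        (fun f hf => hene f (Finset.mem_of_mem_erase hf))
      refine ⟨C, fun _ => ⟨by rw [hCc]; exact hc.2 e he, hCcov, ?_⟩⟩
      rw [← Finset.not_nonempty_iff_eq_empty]
      intro hne2
      have hcovH : IsCover H C := by
        intro f hf
        by_cases hfe : f = e
        · subst hfe; exact hne2
        · exact hCcov f (Finset.mem_erase.mpr ⟨hfe, hf⟩)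
      have h1 := tolAux_coverNumber_le_of_isCover hcovH
      have h2 := hc.1
      have h3 := hc.2 e he
      omega
    · exact ⟨∅, fun h => absurd h he⟩
  choose C hC using key
  have hcard : H.card ≤ 2 ^ (r + s) := by
    set F : Finset (Fin m) → Finset (Finset (Fin m)) :=
      fun e => Finset.univ.powerset.filter fun R => e ⊆ R ∧ C e ∩ R = ∅ with hF
    have hdisj : ∀ e ∈ H, ∀ f ∈ H, e ≠ f → Disjoint (F e) (F f) := by
      intro e he f hf hef
      rw [Finset.disjoint_left]
      intro R hRe hRf
      simp only [hF, Finset.mem_filter] at hRe hRf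
      obtain ⟨x, hx⟩ := (hC f hf).2.1 e (Finset.mem_erase.mpr ⟨hef, he⟩)
      rw [Finset.mem_inter] at hx
      have : x ∈ C f ∩ R := Finset.mem_inter.mpr ⟨hx.2, hRe.2.1 hx.1⟩
      rw [hRf.2.2] at this
      simp at this
    have hFcard : ∀ e ∈ H, 2 ^ (m - (r + s)) ≤ (F e).card := by
      intro e he
      have hmaps : ∀ R ∈ (Finset.univ \ (e ∪ C e)).powerset, R ∪ e ∈ F e := by
        intro R hR
        rw [Finset.mem_powerset] at hR
        simp only [hF, Finset.mem_filter, Finset.mem_powerset]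
        refine ⟨Finset.subset_univ _, Finset.subset_union_right, ?_⟩
        rw [Finset.eq_empty_iff_forall_notMem]
        intro x hx
        rw [Finset.mem_inter, Finset.mem_union] at hx
        rcases hx.2 with hxR | hxe
        · have := hR hxR
          rw [Finset.mem_sdiff, Finset.mem_union] at this
          exact this.2 (Or.inr hx.1)
        · have : x ∈ e ∩ C e := Finset.mem_inter.mpr ⟨hxe, hx.1⟩
          rw [(hC e he).2.2] at this
          simp at this
      have hinj : Set.InjOn (fun R => R ∪ e)
          ((Finset.univ \ (e ∪ C e)).powerset : Finset (Finset (Fin m))) := by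
        intro R1 h1 R2 h2 h12
        rw [Finset.mem_coe, Finset.mem_powerset] at h1 h2
        have hd1 : Disjoint R1 e := by
          rw [Finset.disjoint_left]
          intro a ha hae
          have := h1 ha
          rw [Finset.mem_sdiff, Finset.mem_union] at this
          exact this.2 (Or.inl hae)
        have hd2 : Disjoint R2 e := by
          rw [Finset.disjoint_left]
          intro a ha hae
          have := h2 ha
          rw [Finset.mem_sdiff, Finset.mem_union] at this
          exact this.2 (Or.inl hae)
        have : (R1 ∪ e) \ e = (R2 ∪ e) \ e := by rw [show R1 ∪ e = R2 ∪ e from h12]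
        rwa [Finset.union_sdiff_cancel_right hd1, Finset.union_sdiff_cancel_right hd2] at this
      have h1 := Finset.card_le_card_of_injOn _ hmaps hinj
      rw [Finset.card_powerset] at h1
      refine le_trans ?_ h1
      apply Nat.pow_le_pow_right (by norm_num)
      rw [Finset.card_sdiff_of_subset (Finset.subset_univ _), Finset.card_univ, Fintype.card_fin]
      have hCe := (hC e he).1
      have hee := hu e he
      have : (e ∪ C e).card ≤ e.card + (C e).card := Finset.card_union_le _ _
      omega
    have hsum : H.card * 2 ^ (m - (r + s)) ≤ 2 ^ m := by
      calc H.card * 2 ^ (m - (r + s)) = ∑ _e ∈ H, 2 ^ (m - (r + s)) := by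
            rw [Finset.sum_const, smul_eq_mul]
      _ ≤ ∑ e ∈ H, (F e).card := Finset.sum_le_sum hFcard
      _ = (H.biUnion F).card := (Finset.card_biUnion hdisj).symm
      _ ≤ (Finset.univ.powerset : Finset (Finset (Fin m))).card := by
            apply Finset.card_le_card
            intro R hR
            obtain ⟨e, -, hRe⟩ := Finset.mem_biUnion.mp hR
            simp only [hF, Finset.mem_filter] at hRe
            exact hRe.1
      _ = 2 ^ m := by rw [Finset.card_powerset, Finset.card_univ, Fintype.card_fin]
    have h2 : (2 : ℕ) ^ m ≤ 2 ^ (r + s) * 2 ^ (m - (r + s)) := by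
      rw [← pow_add]
      exact Nat.pow_le_pow_right (by norm_num) (by omega)
    exact Nat.le_of_mul_le_mul_right (le_trans hsum h2) (Nat.pow_pos (by norm_num))
  calc (H.biUnion id).card ≤ ∑ e ∈ H, (id e).card := Finset.card_biUnion_le
  _ = ∑ e ∈ H, r := by
        apply Finset.sum_congr rfl
        intro e he
        simpa using hu e he
  _ = H.card * r := by rw [Finset.sum_const, smul_eq_mul]
  _ ≤ 2 ^ (r + s) * r := Nat.mul_le_mul_right _ hcard
  _ = r * 2 ^ (r + s) := Nat.mul_comm _ _

lemma tolAux_exists_missingFace_subset {K : Finset (Finset α)} (hK : IsComplex K) :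
    ∀ σ : Finset α, σ ∉ K → ∃ μ ⊆ σ, IsMissingFace K μ := by
  classical
  intro σ
  induction σ using Finset.strongInductionOn with
  | _ σ ih =>
    intro h
    by_cases hall : ∀ ρ ⊂ σ, ρ ∈ K
    · exact ⟨σ, Finset.Subset.rfl, h, hall⟩
    · push_neg at hall
      obtain ⟨ρ, hρσ, hρ⟩ := hall
      obtain ⟨μ, h1, h2⟩ := ih ρ hρσ hρ
      exact ⟨μ, h1.trans hρσ.subset, h2⟩

lemma tolAux_mem_tol_iff {A : Finset α} {t : ℕ} {K : Finset (Finset α)} {S : Finset α} (hS : S ⊆ A) :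
    S ∈ tol A t K ↔ ∃ C : Finset α, C.card ≤ t ∧ S \ C ∈ K := by
  constructor
  · intro hmem
    obtain ⟨p, hp, rfl⟩ := Finset.mem_image.mp hmem
    rw [Finset.mem_product] at hp
    obtain ⟨hp1, hp2⟩ := hp
    rw [Finset.mem_filter] at hp1
    refine ⟨p.1 \ p.2, le_trans (Finset.card_le_card Finset.sdiff_subset) hp1.2, ?_⟩
    have h : (p.2 ∪ p.1) \ (p.1 \ p.2) = p.2 := by
      ext x; simp only [Finset.mem_sdiff, Finset.mem_union, not_and, not_not]; tauto
    rw [h]; exact hp2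
  · rintro ⟨C, hC, hSK⟩
    refine Finset.mem_image.mpr ⟨(S ∩ C, S \ C), ?_, ?_⟩
    · rw [Finset.mem_product]
      exact ⟨Finset.mem_filter.mpr ⟨Finset.mem_powerset.mpr (Finset.inter_subset_left.trans hS),
        le_trans (Finset.card_le_card Finset.inter_subset_right) hC⟩, hSK⟩
    · show S \ C ∪ S ∩ C = S
      ext x; simp only [Finset.mem_union, Finset.mem_sdiff, Finset.mem_inter]; tauto

end TolAux

def padAux (d : ℕ) {V : Type*} [DecidableEq V] (e : Finset V) :
    Finset (V ⊕ (Finset V × Fin (d + 1))) :=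
  e.image Sum.inl ∪ (Finset.range (d + 1 - e.card)).image
    (fun i => Sum.inr (e, ⟨min i d, by omega⟩))

lemma mem_padAux_inl (d : ℕ) {V : Type*} [DecidableEq V] (e : Finset V) (v : V) :
    Sum.inl v ∈ padAux d e ↔ v ∈ e := by
  simp only [padAux, Finset.mem_union, Finset.mem_image, Finset.mem_range]
  constructor
  · rintro (⟨w, hw, hwv⟩ | ⟨i, hi, hiv⟩)
    · rwa [← Sum.inl_injective hwv]
    · exact absurd hiv (by simp)
  · intro hv
    exact Or.inl ⟨v, hv, rfl⟩

lemma mem_padAux_inr (d : ℕ) {V : Type*} [DecidableEq V] (e s : Finset V) (j : Fin (d + 1))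
    (h : Sum.inr (s, j) ∈ padAux d e) : s = e := by
  simp only [padAux, Finset.mem_union, Finset.mem_image, Finset.mem_range] at h
  rcases h with ⟨w, -, hw⟩ | ⟨i, -, hi⟩
  · exact absurd hw (by simp)
  · exact (congrArg Prod.fst (Sum.inr_injective hi)).symm

lemma padAux_card (d : ℕ) {V : Type*} [DecidableEq V] (e : Finset V) (he : e.card ≤ d + 1) :
    (padAux d e).card = d + 1 := by
  have hdisj : Disjoint (e.image (Sum.inl : V → V ⊕ (Finset V × Fin (d + 1))))
      ((Finset.range (d + 1 - e.card)).image
        (fun i => (Sum.inr (e, ⟨min i d, by omega⟩) : V ⊕ (Finset V × Fin (d + 1))))) := by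
    rw [Finset.disjoint_left]
    rintro a ha hb
    obtain ⟨v, -, rfl⟩ := Finset.mem_image.mp ha
    obtain ⟨i, -, hi⟩ := Finset.mem_image.mp hb
    exact absurd hi (by simp)
  rw [padAux, Finset.card_union_of_disjoint hdisj,
    Finset.card_image_of_injective _ Sum.inl_injective, Finset.card_image_of_injOn, Finset.card_range]
  · omega
  · intro i hi j hj hij
    rw [Finset.mem_coe, Finset.mem_range] at hi hj
    have h2 : min i d = min j d := congrArg Fin.val (congrArg Prod.snd (Sum.inr_injective hij))
    omega

lemma padAux_injective (d : ℕ) {V : Type*} [DecidableEq V] :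
    Function.Injective (padAux d (V := V)) := by
  intro e f h
  ext v
  rw [← mem_padAux_inl d e v, h, mem_padAux_inl]

/-- If every missing face `τ` of `K` satisfies `|τ| - 1 ≤ d` (i.e. the Helly number of `K` is
at most `d`), then every missing face `τ` of the `t`-tolerance complex `T_t(K)` satisfies
`|τ| - 1 ≤ η(d+1,t+1) - 1`. -/
theorem helly_number_of_tolerance_complex
    {V : Type*} [DecidableEq V] [Fintype V]
    (K : Finset (Finset V)) (hK : IsComplex K) (d t : ℕ)
    (hH : ∀ τ : Finset V, IsMissingFace K τ → (τ.card : ℤ) - 1 ≤ (d : ℤ)) :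
    ∀ τ : Finset V, IsMissingFace (tol Finset.univ t K) τ →
      (τ.card : ℤ) - 1 ≤ (eta (d + 1) (t + 1) : ℤ) - 1 := by
  classical
  intro τ hτ
  have hetan : (0 : ℤ) ≤ (eta (d + 1) (t + 1) : ℤ) := Int.natCast_nonneg _
  rcases Finset.eq_empty_or_nonempty τ with rfl | ⟨v0, hv0⟩
  · simp only [Finset.card_empty, Nat.cast_zero]
    omega
  obtain ⟨hτT, hτsub⟩ := hτ
  have hτne : τ.Nonempty := ⟨v0, hv0⟩
  have hKne : (∅ : Finset V) ∈ K := by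
    have h1 : (∅ : Finset V) ∈ tol Finset.univ t K :=
      hτsub ∅ (Finset.empty_ssubset.mpr hτne)
    obtain ⟨p, hp, -⟩ := Finset.mem_image.mp h1
    rw [Finset.mem_product] at hp
    exact hK p.2 hp.2 ∅ (Finset.empty_subset _)
  set M : Finset (Finset V) := τ.powerset.filter (fun ρ => IsMissingFace K ρ) with hM
  have hMmem : ∀ μ ∈ M, μ ⊆ τ ∧ IsMissingFace K μ := by
    intro μ hμ
    rw [hM, Finset.mem_filter, Finset.mem_powerset] at hμ
    exact hμ
  have hMne : ∀ μ ∈ M, μ.Nonempty := by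
    intro μ hμ
    rw [Finset.nonempty_iff_ne_empty]
    rintro rfl
    exact (hMmem _ hμ).2.1 hKne
  have hMcard : ∀ μ ∈ M, μ.card ≤ d + 1 := by
    intro μ hμ
    have := hH μ (hMmem _ hμ).2
    omega
  have hCov : ∀ C : Finset V, IsCover M C → t + 1 ≤ C.card := by
    intro C hC
    by_contra hlt
    push_neg at hlt
    apply hτT
    rw [tolAux_mem_tol_iff (Finset.subset_univ τ)]
    refine ⟨C, by omega, ?_⟩
    by_contra hnot
    obtain ⟨μ, hμsub, hμmf⟩ := tolAux_exists_missingFace_subset hK _ hnot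
    have hμM : μ ∈ M := by
      rw [hM, Finset.mem_filter, Finset.mem_powerset]
      exact ⟨hμsub.trans Finset.sdiff_subset, hμmf⟩
    obtain ⟨x, hx⟩ := hC μ hμM
    rw [Finset.mem_inter] at hx
    exact (Finset.mem_sdiff.mp (hμsub hx.1)).2 hx.2
  have hMself : t + 1 ≤ coverNumber M := by
    obtain ⟨C, hCc, hCcov⟩ := tolAux_exists_isCover hMne
    rw [← hCc]
    exact hCov C hCcov
  obtain ⟨H', hH'mem, hH'min⟩ := Finset.exists_min_image
    (M.powerset.filter fun G => t + 1 ≤ coverNumber G) Finset.card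
    ⟨M, Finset.mem_filter.mpr ⟨Finset.mem_powerset.mpr Finset.Subset.rfl, hMself⟩⟩
  rw [Finset.mem_filter, Finset.mem_powerset] at hH'mem
  obtain ⟨hH'M, hH'cn⟩ := hH'mem
  have hH'ne : ∀ e ∈ H', e.Nonempty := fun e he => hMne e (hH'M he)
  have hH'erase : ∀ e ∈ H', coverNumber (H'.erase e) < t + 1 := by
    intro e he
    by_contra hge
    push_neg at hge
    have hmem2 : H'.erase e ∈ M.powerset.filter fun G => t + 1 ≤ coverNumber G :=
      Finset.mem_filter.mpr ⟨Finset.mem_powerset.mpr ((Finset.erase_subset _ _).trans hH'M), hge⟩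
    have h1 := hH'min _ hmem2
    have h2 := Finset.card_erase_lt_of_mem he
    omega
  have hH'cne : coverNumber H' = t + 1 := by
    refine le_antisymm ?_ hH'cn
    have hH'nonempty : H'.Nonempty := by
      rw [Finset.nonempty_iff_ne_empty]
      rintro rfl
      rw [tolAux_coverNumber_empty] at hH'cn
      omega
    obtain ⟨e, he⟩ := hH'nonempty
    obtain ⟨C, hCc, hCcov⟩ :=
      tolAux_exists_isCover (fun f hf => hH'ne f (Finset.mem_of_mem_erase hf))
    obtain ⟨x, hx⟩ := hH'ne e he
    have hcov2 : IsCover H' (insert x C) := by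
      intro f hf
      by_cases hfe : f = e
      · subst hfe
        exact ⟨x, Finset.mem_inter.mpr ⟨hx, Finset.mem_insert_self _ _⟩⟩
      · obtain ⟨y, hy⟩ := hCcov f (Finset.mem_erase.mpr ⟨hfe, hf⟩)
        rw [Finset.mem_inter] at hy
        exact ⟨y, Finset.mem_inter.mpr ⟨hy.1, Finset.mem_insert_of_mem hy.2⟩⟩
    have h1 := tolAux_coverNumber_le_of_isCover hcov2
    have h2 := Finset.card_insert_le x C
    have h3 := hH'erase e he
    omega
  have hτunion : τ ⊆ H'.biUnion id := by
    intro v hv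
    by_contra hvnot
    have hsmall : τ.erase v ∈ tol Finset.univ t K := hτsub _ (Finset.erase_ssubset hv)
    rw [tolAux_mem_tol_iff (Finset.subset_univ _)] at hsmall
    obtain ⟨C, hCc, hCK⟩ := hsmall
    have hcov3 : IsCover H' C := by
      intro μ hμ
      by_contra hnone
      rw [Finset.not_nonempty_iff_eq_empty] at hnone
      have hμτ := (hMmem μ (hH'M hμ)).1
      have hsub2 : μ ⊆ (τ.erase v) \ C := by
        intro x hxμ
        rw [Finset.mem_sdiff, Finset.mem_erase]
        refine ⟨⟨?_, hμτ hxμ⟩, ?_⟩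
        · rintro rfl
          exact hvnot (Finset.mem_biUnion.mpr ⟨μ, hμ, hxμ⟩)
        · intro hxC
          have hxx : x ∈ μ ∩ C := Finset.mem_inter.mpr ⟨hxμ, hxC⟩
          rw [hnone] at hxx
          simp at hxx
      exact (hMmem μ (hH'M hμ)).2.1 (hK _ hCK μ hsub2)
    have := tolAux_coverNumber_le_of_isCover hcov3
    omega
  -- transfer to `Fin m` via padding
  set ε := Fintype.equivFin (V ⊕ (Finset V × Fin (d + 1))) with hε
  set g : Finset V → Finset (Fin (Fintype.card (V ⊕ (Finset V × Fin (d + 1))))) :=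
    fun e => (padAux d e).image ε with hg
  have hg_inj : Function.Injective g := by
    intro e f h
    apply padAux_injective d
    apply Finset.image_injective ε.injective
    exact h
  have hdn : ∀ G : Finset (Finset V), G ⊆ H' → coverNumber (G.image g) = coverNumber G := by
    intro G hG
    apply tolAux_coverNumber_image G g (fun v => ε (Sum.inl v))
      (fun w => Sum.elim id (fun p => if h : p.1.Nonempty then h.choose else v0) (ε.symm w))
    · exact fun e he => hH'ne e (hG he)
    · intro e he v hv
      exact Finset.mem_image_of_mem ε ((mem_padAux_inl d e v).mpr hv)
    · intro e he w hw
      simp only [hg] at hw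
      obtain ⟨x, hx, rfl⟩ := Finset.mem_image.mp hw
      rw [Equiv.symm_apply_apply]
      cases x with
      | inl v =>
        simpa using (mem_padAux_inl d e v).mp hx
      | inr p =>
        obtain ⟨s, j⟩ := p
        have hs := mem_padAux_inr d e s j hx
        simp only [Sum.elim_inr, hs]
        rw [dif_pos (hH'ne e (hG he))]
        exact (hH'ne e (hG he)).choose_spec
  set HB := H'.image g with hHB
  have hHBuniform : ∀ eh ∈ HB, eh.card = d + 1 := by
    intro eh heh
    rw [hHB] at heh
    obtain ⟨e, he, rfl⟩ := Finset.mem_image.mp heh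
    simp only [hg]
    rw [Finset.card_image_of_injective _ ε.injective]
    exact padAux_card d e (hMcard e (hH'M he))
  have hHBcrit : IsCritical (t + 1) HB := by
    constructor
    · rw [hHB, hdn H' Finset.Subset.rfl]
      exact hH'cne
    · intro eh heh
      rw [hHB] at heh
      obtain ⟨e, he, rfl⟩ := Finset.mem_image.mp heh
      rw [hHB, ← Finset.image_erase hg_inj, hdn (H'.erase e) ((Finset.erase_subset _ _))]
      exact hH'erase e he
  have hfin1 : τ.card ≤ (HB.biUnion id).card := by
    have h2 : (H'.biUnion id).card ≤ (HB.biUnion id).card := by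
      apply Finset.card_le_card_of_injOn (fun v => ε (Sum.inl v))
      · intro v hv
        obtain ⟨e, he, hve⟩ := Finset.mem_biUnion.mp hv
        refine Finset.mem_biUnion.mpr ⟨g e, ?_, ?_⟩
        · rw [hHB]
          exact Finset.mem_image_of_mem g he
        · show ε (Sum.inl v) ∈ g e
          simp only [hg]
          exact Finset.mem_image_of_mem ε ((mem_padAux_inl d e v).mpr hve)
      · intro a _ b _ hab
        exact Sum.inl_injective (ε.injective hab)
    have h1 := Finset.card_le_card hτunion
    omega
  have hbdd : BddAbove {n : ℕ | ∃ (m : ℕ) (H : Finset (Finset (Fin m))),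
      (∀ e ∈ H, e.card = d + 1) ∧ IsCritical (t + 1) H ∧ (H.biUnion id).card = n} := by
    refine ⟨(d + 1) * 2 ^ ((d + 1) + (t + 1)), ?_⟩
    rintro n ⟨m, Hh, hu2, hc2, rfl⟩
    exact tolAux_critical_card_bound _ _ _ hu2 hc2
  have hle : (HB.biUnion id).card ≤ eta (d + 1) (t + 1) := by
    unfold eta
    exact le_csSup hbdd ⟨_, HB, hHBuniform, hHBcrit, rfl⟩
  omega
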